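/- Counting self-orthogonal subspaces through a vector: Let F = ℤ/dℤ with d prime, and let A be the set of all self-orthogonal subspaces L ⊆ F^{2n} (L ⊆ L^⊥ with respect to the standard symplectic form) with dim L = n - m, where 0 ≤ m < n. For x ∈ F^{2n}, let A(x) = {L ∈ A : x ∈ L^⊥}. Then A is nonempty, and for every nonzero x ∈ F^{2n}, |A(x)|/|A| = (d^{n+m} - 1)/(d^{2n} - 1). -/

import Mathlib

/-!
Double count the pairs `(v, L)` with `v ≠ 0`, `L ∈ A` and `v ∈ L^⊥`. Each `L ∈ A` lies in
`d^{n+m} - 1` of them, since `L^⊥` has dimension `2n - (n - m)`. Each nonzero `v` lies in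
`|A(v)|` of them, and `|A(v)| = |A(x)|`: an isometry `g` with `g x = v` maps `A(x)` onto
`A(v)`. Such a `g` is a product of at most two symplectic transvections `w ↦ w + c⟨w, u⟩u`:
one suffices when `⟨x, v⟩ ≠ 0`, and otherwise one passes through some `z` with
`⟨x, z⟩ ≠ 0 ≠ ⟨z, v⟩`. Hence `|A| (d^{n+m} - 1) = (d^{2n} - 1) |A(x)|`.
-/

open scoped BigOperators

/-- The standard symplectic bilinear form on `F^{2n}` (viewed as `(F²)^n`),
`⟨x, y⟩ = ∑ i, (u_i v_i' - v_i u_i')`. -/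
noncomputable def sympForm (d n : ℕ) :
    LinearMap.BilinForm (ZMod d) (Fin n → ZMod d × ZMod d) :=
  LinearMap.mk₂ (ZMod d)
    (fun x y => ∑ i, ((x i).1 * (y i).2 - (x i).2 * (y i).1))
    (by
      intro m₁ m₂ y
      rw [← Finset.sum_add_distrib]
      refine Finset.sum_congr rfl fun i _ => ?_
      simp only [Pi.add_apply, Prod.fst_add, Prod.snd_add]
      ring)
    (by
      intro c m y
      simp only [smul_eq_mul]
      rw [Finset.mul_sum]
      refine Finset.sum_congr rfl fun i _ => ?_
      simp only [Pi.smul_apply, Prod.smul_fst, Prod.smul_snd, smul_eq_mul]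
      ring)
    (by
      intro x m₁ m₂
      rw [← Finset.sum_add_distrib]
      refine Finset.sum_congr rfl fun i _ => ?_
      simp only [Pi.add_apply, Prod.fst_add, Prod.snd_add]
      ring)
    (by
      intro c x m
      simp only [smul_eq_mul]
      rw [Finset.mul_sum]
      refine Finset.sum_congr rfl fun i _ => ?_
      simp only [Pi.smul_apply, Prod.smul_fst, Prod.smul_snd, smul_eq_mul]
      ring)

/-- A self-orthogonal subspace of `F^{2n}` of dimension `n - m`. -/
def IsGoodSubspace (d n m : ℕ) (L : Submodule (ZMod d) (Fin n → ZMod d × ZMod d)) : Prop :=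
  L ≤ (sympForm d n).orthogonal L ∧ Module.finrank (ZMod d) L = n - m

open Module Finset

instance Submodule.finite_of_finite {R M : Type*} [Semiring R] [AddCommMonoid M] [Module R M]
    [Finite M] : Finite (Submodule R M) :=
  Finite.of_injective _ SetLike.coe_injective

theorem Submodule.exists_le_finrank_eq {K V : Type*} [DivisionRing K] [AddCommGroup V]
    [Module K V] (N : Submodule K V) {k : ℕ} (hk : k ≤ finrank K N) :
    ∃ L ≤ N, finrank K L = k := by
  obtain ⟨f, hf⟩ := exists_linearIndependent_of_le_finrank hk
  refine ⟨span K (Set.range (N.subtype ∘ f)), span_le.2 ?_, ?_⟩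
  · rintro _ ⟨i, rfl⟩
    exact (f i).2
  · rw [finrank_span_eq_card (hf.map' N.subtype N.ker_subtype), Fintype.card_fin]

theorem Submodule.card_filter_mem_compl_zero {R M : Type*} [Semiring R] [AddCommMonoid M]
    [Module R M] [Fintype M] [DecidableEq M] (W : Submodule R M) [DecidablePred (· ∈ W)] :
    #{v ∈ ({0}ᶜ : Finset M) | v ∈ W} = Nat.card W - 1 := by
  have : {v ∈ ({0}ᶜ : Finset M) | v ∈ W} = ({v | v ∈ W} : Finset M).erase 0 := by
    ext; simp [and_comm]
  rw [this, card_erase_of_mem (by simp), ← Fintype.card_subtype, Nat.card_eq_fintype_card]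

theorem LinearMap.exists_apply_ne_zero_and_apply_ne_zero {R M N : Type*} [Semiring R]
    [AddCommMonoid M] [AddCommMonoid N] [Module R M] [Module R N] {f g : M →ₗ[R] N}
    (hf : f ≠ 0) (hg : g ≠ 0) : ∃ z, f z ≠ 0 ∧ g z ≠ 0 := by
  obtain ⟨z₁, hz₁⟩ := DFunLike.ne_iff.mp hf
  obtain ⟨z₂, hz₂⟩ := DFunLike.ne_iff.mp hg
  by_cases h₁ : g z₁ = 0
  · by_cases h₂ : f z₂ = 0
    · exact ⟨z₁ + z₂, by simpa [h₂] using hz₁, by simpa [h₁] using hz₂⟩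
    · exact ⟨z₂, h₂, hz₂⟩
  · exact ⟨z₁, hz₁, h₁⟩

namespace LinearMap.BilinForm

variable {K V : Type*} [Field K] [AddCommGroup V] [Module K V] {B : LinearMap.BilinForm K V}

def symplecticTransvection (hB : B.IsAlt) (v : V) (c : K) : B.IsometryEquiv B where
  toLinearEquiv :=
    LinearEquiv.transvection (f := c • B.flip v) (v := v) (by simp [hB.self_eq_zero])
  map_app' a b := by
    simp only [LinearEquiv.toFun_eq_coe, LinearEquiv.transvection.coe_apply,
      LinearMap.transvection.apply, map_add, map_smul, LinearMap.add_apply, LinearMap.smul_apply,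
      flip_apply, smul_eq_mul, hB.self_eq_zero, ← hB.neg_eq b v]
    ring

theorem symplecticTransvection_apply (hB : B.IsAlt) (v : V) (c : K) (w : V) :
    symplecticTransvection hB v c w = w + (c * B w v) • v := rfl

theorem IsAlt.exists_isometryEquiv_apply_eq_of_apply_ne_zero (hB : B.IsAlt) {x y : V}
    (hxy : B x y ≠ 0) : ∃ g : B.IsometryEquiv B, g x = y := by
  refine ⟨symplecticTransvection hB (y - x) (B x y)⁻¹, ?_⟩
  rw [symplecticTransvection_apply, map_sub, hB.self_eq_zero, sub_zero, inv_mul_cancel₀ hxy,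
    one_smul, add_sub_cancel]

theorem IsAlt.exists_isometryEquiv_apply_eq (hB : B.IsAlt) (hB' : B.SeparatingLeft) {x y : V}
    (hx : x ≠ 0) (hy : y ≠ 0) : ∃ g : B.IsometryEquiv B, g x = y := by
  obtain ⟨z, hxz, hyz⟩ := exists_apply_ne_zero_and_apply_ne_zero (f := B x) (g := B y)
    (fun h => hx (hB' x (by simp [h]))) (fun h => hy (hB' y (by simp [h])))
  obtain ⟨g₁, hg₁⟩ := hB.exists_isometryEquiv_apply_eq_of_apply_ne_zero hxz
  obtain ⟨g₂, hg₂⟩ := hB.exists_isometryEquiv_apply_eq_of_apply_ne_zero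
    (x := z) (y := y) (by rwa [← hB.neg_eq, neg_ne_zero])
  exact ⟨g₁.trans g₂, show g₂ (g₁ x) = y by rw [hg₁, hg₂]⟩

theorem IsometryEquiv.orthogonal_map (g : B.IsometryEquiv B) (L : Submodule K V) :
    B.orthogonal (L.map (g.toLinearEquiv : V →ₗ[K] V)) =
      (B.orthogonal L).map (g.toLinearEquiv : V →ₗ[K] V) := by
  ext v
  obtain ⟨w, rfl⟩ := g.toLinearEquiv.surjective v
  rw [Submodule.mem_map_equiv, LinearEquiv.symm_apply_apply]
  simp only [mem_orthogonal_iff, Submodule.mem_map, LinearEquiv.coe_coe, forall_exists_index,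
    and_imp, forall_apply_eq_imp_iff₂]
  exact forall₂_congr fun a _ => Iff.of_eq (congrArg (· = 0) (g.map_app w a))

theorem IsometryEquiv.card_isotropic_mem_orthogonal_apply (g : B.IsometryEquiv B) (k : ℕ)
    (x : V) :
    Nat.card {L : Submodule K V //
        (L ≤ B.orthogonal L ∧ finrank K L = k) ∧ x ∈ B.orthogonal L} =
      Nat.card {L : Submodule K V //
        (L ≤ B.orthogonal L ∧ finrank K L = k) ∧ g x ∈ B.orthogonal L} := by
  refine Nat.card_congr ((Submodule.orderIsoMapComap g.toLinearEquiv).toEquiv.subtypeEquiv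
    fun L => ?_)
  let e : V →ₗ[K] V := g.toLinearEquiv
  change _ ↔ (L.map e ≤ B.orthogonal (L.map e) ∧ finrank K (L.map e) = k) ∧
    g.toLinearEquiv x ∈ B.orthogonal (L.map e)
  rw [g.orthogonal_map, Submodule.map_le_map_iff_of_injective g.toLinearEquiv.injective,
    LinearEquiv.finrank_map_eq, Submodule.mem_map_equiv, LinearEquiv.symm_apply_apply]

theorem card_isotropic_mul_eq_mul_card_mem_orthogonal [Finite K] [FiniteDimensional K V]
    (hB : B.IsAlt) (hB' : B.Nondegenerate) (k : ℕ) {x : V} (hx : x ≠ 0) :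
    Nat.card {L : Submodule K V // L ≤ B.orthogonal L ∧ finrank K L = k} *
        (Nat.card K ^ (finrank K V - k) - 1) =
      (Nat.card K ^ finrank K V - 1) * Nat.card {L : Submodule K V //
        (L ≤ B.orthogonal L ∧ finrank K L = k) ∧ x ∈ B.orthogonal L} := by
  classical
  have : Finite V := Module.finite_of_finite K
  have : Fintype V := Fintype.ofFinite V
  have : Fintype (Submodule K V) := Fintype.ofFinite _
  have key := card_mul_eq_card_mul (fun (L : Submodule K V) v => v ∈ B.orthogonal L)
    (s := {L | L ≤ B.orthogonal L ∧ finrank K L = k}) (t := {0}ᶜ)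
    (m := Nat.card K ^ (finrank K V - k) - 1)
    (n := Nat.card {L : Submodule K V //
        (L ≤ B.orthogonal L ∧ finrank K L = k) ∧ x ∈ B.orthogonal L})
    (fun L hL => by
      rw [bipartiteAbove, Submodule.card_filter_mem_compl_zero, natCard_eq_pow_finrank (K := K),
        finrank_orthogonal hB', (mem_filter.1 hL).2.2])
    (fun v hv => by
      obtain ⟨g, rfl⟩ := hB.exists_isometryEquiv_apply_eq hB'.1 hx (by simpa using hv)
      rw [g.card_isotropic_mem_orthogonal_apply, bipartiteBelow, Nat.card_eq_fintype_card,
        Fintype.card_subtype, filter_filter])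
  rwa [card_compl, card_singleton, ← Fintype.card_subtype, ← Nat.card_eq_fintype_card,
    ← Nat.card_eq_fintype_card, natCard_eq_pow_finrank (K := K) (V := V)] at key

end LinearMap.BilinForm

section Symplectic

open LinearMap.BilinForm

variable (d n : ℕ)

theorem sympForm_apply (x y : Fin n → ZMod d × ZMod d) :
    sympForm d n x y = ∑ i, ((x i).1 * (y i).2 - (x i).2 * (y i).1) := rfl

theorem sympForm_apply_single (x : Fin n → ZMod d × ZMod d) (i : Fin n) (p : ZMod d × ZMod d) :
    sympForm d n x (Pi.single i p) = (x i).1 * p.2 - (x i).2 * p.1 := by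
  rw [sympForm_apply, Finset.sum_eq_single i (fun j _ hj => by simp [hj]) (by simp)]
  simp

theorem sympForm_isAlt : (sympForm d n).IsAlt := fun x => by
  rw [sympForm_apply]
  exact Finset.sum_eq_zero fun i _ => by ring

theorem sympForm_nondegenerate : (sympForm d n).Nondegenerate := by
  refine (sympForm_isAlt d n).isRefl.nondegenerate_iff_separatingLeft.2 fun x hx => ?_
  funext i
  ext
  · simpa [sympForm_apply_single] using hx (Pi.single i (0, 1))
  · simpa [sympForm_apply_single] using hx (Pi.single i (1, 0))

variable [Fact d.Prime]

theorem finrank_sympSpace : finrank (ZMod d) (Fin n → ZMod d × ZMod d) = 2 * n := by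
  rw [finrank_pi_fintype, mul_comm]
  simp

theorem exists_isGoodSubspace (m : ℕ) : ∃ L, IsGoodSubspace d n m L := by
  let ι : (Fin n → ZMod d) →ₗ[ZMod d] Fin n → ZMod d × ZMod d :=
    LinearMap.pi fun i => LinearMap.inl _ _ _ ∘ₗ LinearMap.proj i
  have hι : Function.Injective ι := fun a b h => funext fun i => congrArg (fun v => (v i).1) h
  have hΛ : LinearMap.range ι ≤ (sympForm d n).orthogonal (LinearMap.range ι) := by
    rintro _ ⟨a, rfl⟩ _ ⟨b, rfl⟩
    simp [ι, sympForm_apply]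
  obtain ⟨L, hLΛ, hL⟩ := (LinearMap.range ι).exists_le_finrank_eq (k := n - m)
    (by rw [LinearMap.finrank_range_of_inj hι, finrank_fin_fun]; omega)
  exact ⟨L, hLΛ.trans (hΛ.trans (orthogonal_le hLΛ)), hL⟩

theorem card_isGoodSubspace_mul {m : ℕ} (hm : m ≤ n) {x : Fin n → ZMod d × ZMod d}
    (hx : x ≠ 0) :
    Nat.card {L // IsGoodSubspace d n m L} * (d ^ (n + m) - 1) =
      (d ^ (2 * n) - 1) *
        Nat.card {L // IsGoodSubspace d n m L ∧ x ∈ (sympForm d n).orthogonal L} := by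
  have := card_isotropic_mul_eq_mul_card_mem_orthogonal (sympForm_isAlt d n)
    (sympForm_nondegenerate d n) (n - m) hx
  rwa [Nat.card_zmod, finrank_sympSpace, show 2 * n - (n - m) = n + m by omega] at this

end Symplectic

/-- Counting self-orthogonal subspaces through a vector: with `A` the collection of
self-orthogonal `(n-m)`-dimensional subspaces of `F^{2n}` and
`A(x) = {L ∈ A : x ∈ L^⊥}`, the collection `A` is nonempty and for every nonzero `x`,
`|A(x)| / |A| = (d^{n+m} - 1) / (d^{2n} - 1)`. -/
theorem card_good_through_vector (d n m : ℕ) [Fact (Nat.Prime d)] (hm : m < n)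
    (x : Fin n → ZMod d × ZMod d) (hx : x ≠ 0) :
    Nat.card {L : Submodule (ZMod d) (Fin n → ZMod d × ZMod d) // IsGoodSubspace d n m L}
        ≠ 0 ∧
    (Nat.card {L : Submodule (ZMod d) (Fin n → ZMod d × ZMod d) //
          IsGoodSubspace d n m L ∧ x ∈ (sympForm d n).orthogonal L} : ℚ) /
        (Nat.card {L : Submodule (ZMod d) (Fin n → ZMod d × ZMod d) //
          IsGoodSubspace d n m L} : ℚ)
      = ((d : ℚ) ^ (n + m) - 1) / ((d : ℚ) ^ (2 * n) - 1) := by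
  obtain ⟨L, hL⟩ := exists_isGoodSubspace d n m
  have hA : Nat.card {L // IsGoodSubspace d n m L} ≠ 0 :=
    Nat.card_ne_zero.2 ⟨⟨⟨L, hL⟩⟩, inferInstance⟩
  refine ⟨hA, ?_⟩
  have hd : 1 < d := (Fact.out : d.Prime).one_lt
  have hcount := congrArg (Nat.cast : ℕ → ℚ) (card_isGoodSubspace_mul d n hm.le hx)
  push_cast [Nat.one_le_pow _ _ (by omega : 0 < d)] at hcount
  have hD : (d : ℚ) ^ (2 * n) - 1 ≠ 0 :=
    sub_ne_zero.2 (one_lt_pow₀ (by exact_mod_cast hd) (by omega)).ne'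
  rw [div_eq_div_iff (by exact_mod_cast hA) hD]
  linear_combination -hcount
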